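/- For all 0 < c < d, one has ⟨log²t⟩_{[c,d]} - (⟨log t⟩_{[c,d]})² ≤ 1; hence the function t ↦ log t on (0,∞) satisfies sup_{0<c<d} (⟨log²t⟩_{[c,d]} - ⟨log t⟩_{[c,d]}²) = 1. -/

import Mathlib

open MeasureTheory

/-- Average of `f` over the interval `[c,d]`. -/
noncomputable def iavg (c d : ℝ) (f : ℝ → ℝ) : ℝ := (d - c)⁻¹ * ∫ t in c..d, f t

lemma integral_log_sq (c d : ℝ) (hc : 0 < c) (hd : 0 < d) :
    ∫ t in c..d, (Real.log t) ^ 2 =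
      (d * (Real.log d) ^ 2 - 2 * d * Real.log d + 2 * d)
      - (c * (Real.log c) ^ 2 - 2 * c * Real.log c + 2 * c) := by
  have hpos : ∀ t ∈ Set.uIcc c d, 0 < t := fun t ht =>
    lt_of_lt_of_le (lt_min hc hd) ht.1
  have hderiv : ∀ t ∈ Set.uIcc c d,
      HasDerivAt (fun t => t * (Real.log t) ^ 2 - 2 * t * Real.log t + 2 * t)
        ((Real.log t) ^ 2) t := by
    intro t ht
    have htpos := hpos t ht
    have h1 : HasDerivAt Real.log t⁻¹ t := Real.hasDerivAt_log htpos.ne'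
    have h2 : HasDerivAt (fun t : ℝ => t * (Real.log t) ^ 2)
        (1 * (Real.log t) ^ 2 + t * (2 * Real.log t ^ 1 * t⁻¹)) t :=
      (hasDerivAt_id t).mul (h1.pow 2)
    have h3 : HasDerivAt (fun t : ℝ => 2 * t * Real.log t)
        ((2 * 1) * Real.log t + 2 * t * t⁻¹) t :=
      ((hasDerivAt_id t).const_mul 2).mul h1
    have h4 : HasDerivAt (fun t : ℝ => 2 * t) 2 t := by simpa using (hasDerivAt_id t).const_mul (2:ℝ)
    have := (h2.sub h3).add h4
    refine this.congr_deriv ?_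
    have ht : t * t⁻¹ = 1 := mul_inv_cancel₀ htpos.ne'
    linear_combination (2 * Real.log t - 2) * ht
  have hcont : IntervalIntegrable (fun t => (Real.log t) ^ 2) volume c d := by
    apply ContinuousOn.intervalIntegrable
    exact (Real.continuousOn_log.mono (fun t ht => (hpos t ht).ne')).pow 2
  simpa using intervalIntegral.integral_eq_sub_of_hasDerivAt hderiv hcont

lemma variance_eq (c d : ℝ) (hc : 0 < c) (hcd : c < d) :
    iavg c d (fun t => (Real.log t) ^ 2) - (iavg c d (fun t => Real.log t)) ^ 2
      = 1 - c * d * (Real.log d - Real.log c) ^ 2 / (d - c) ^ 2 := by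
  have hd : 0 < d := hc.trans hcd
  have hne : d - c ≠ 0 := sub_ne_zero.mpr hcd.ne'
  unfold iavg
  rw [integral_log_sq c d hc hd, integral_log]
  field_simp
  ring

theorem log_in_unit_BMO_ball :
    (∀ c d : ℝ, 0 < c → c < d →
      iavg c d (fun t => (Real.log t) ^ 2) - (iavg c d (fun t => Real.log t)) ^ 2 ≤ 1) ∧
    sSup {y : ℝ | ∃ c d : ℝ, 0 < c ∧ c < d ∧
      y = iavg c d (fun t => (Real.log t) ^ 2) - (iavg c d (fun t => Real.log t)) ^ 2} = 1 := by
  have part1 : ∀ c d : ℝ, 0 < c → c < d →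
      iavg c d (fun t => (Real.log t) ^ 2) - (iavg c d (fun t => Real.log t)) ^ 2 ≤ 1 := by
    intro c d hc hcd
    rw [variance_eq c d hc hcd]
    have hd : 0 < d := hc.trans hcd
    have : 0 ≤ c * d * (Real.log d - Real.log c) ^ 2 / (d - c) ^ 2 := by positivity
    linarith
  refine ⟨part1, ?_⟩
  set S := {y : ℝ | ∃ c d : ℝ, 0 < c ∧ c < d ∧
      y = iavg c d (fun t => (Real.log t) ^ 2) - (iavg c d (fun t => Real.log t)) ^ 2}
  have hub : ∀ y ∈ S, y ≤ 1 := by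
    rintro y ⟨c, d, hc, hcd, rfl⟩
    exact part1 c d hc hcd
  have hbdd : BddAbove S := ⟨1, hub⟩
  have hne : S.Nonempty := ⟨_, 1, 2, one_pos, one_lt_two, rfl⟩
  refine le_antisymm (csSup_le hne hub) ?_
  -- consider c = exp (-x), d = 1
  have hval : ∀ x : ℝ, 0 < x →
      (1 - Real.exp (-x) * x ^ 2 / (1 - Real.exp (-x)) ^ 2) ∈ S := by
    intro x hx
    have hc : 0 < Real.exp (-x) := Real.exp_pos _
    have hcd : Real.exp (-x) < 1 := by
      rw [Real.exp_lt_one_iff]; linarith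
    refine ⟨Real.exp (-x), 1, hc, hcd, ?_⟩
    rw [variance_eq _ _ hc hcd]
    rw [Real.log_one, Real.log_exp]
    ring_nf
  have htend : Filter.Tendsto
      (fun x : ℝ => 1 - Real.exp (-x) * x ^ 2 / (1 - Real.exp (-x)) ^ 2)
      Filter.atTop (nhds 1) := by
    have h1 : Filter.Tendsto (fun x : ℝ => x ^ 2 * Real.exp (-x))
        Filter.atTop (nhds 0) := Real.tendsto_pow_mul_exp_neg_atTop_nhds_zero 2
    have h2 : Filter.Tendsto (fun x : ℝ => (1 - Real.exp (-x)) ^ 2)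
        Filter.atTop (nhds 1) := by
      have : Filter.Tendsto (fun x : ℝ => Real.exp (-x)) Filter.atTop (nhds 0) :=
        Real.tendsto_exp_neg_atTop_nhds_zero
      have h2' : Filter.Tendsto (fun x : ℝ => (1:ℝ) - Real.exp (-x))
          Filter.atTop (nhds (1 - 0)) := tendsto_const_nhds.sub this
      simpa using h2'.pow 2
    have h3 : Filter.Tendsto
        (fun x : ℝ => Real.exp (-x) * x ^ 2 / (1 - Real.exp (-x)) ^ 2)
        Filter.atTop (nhds 0) := by
      have := (h1.div h2 one_ne_zero)
      simpa [mul_comm, Pi.div_def] using this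
    simpa using tendsto_const_nhds.sub h3
  refine le_of_tendsto htend ?_
  filter_upwards [Filter.eventually_gt_atTop 0] with x hx
  exact le_csSup hbdd (hval x hx)
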